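/- For every ε ∈ (0,1) and every γ > 0 there exists a frog-strategy S such that Succ(S, A_{ε-ws}) > 1 − ε − γ, and moreover S has the safety property that for every b ∈ {0,1}^ω the death probability satisfies DP(S, b) ≤ ε + γ. -/

import Mathlib

/-- A frog-strategy: for each infinite binary sequence `b` (0-indexed: `b i` is bit `b_{i+1}`),
a probability distribution on `ℕ ∪ {∞}`, where `some i` means "cross at minute `i+1`" and
`none` means "wait forever".  The distribution at minute `i+1` may depend only on the
first `i` bits of `b`. -/
structure FrogStrategy where
  prob : (ℕ → Bool) → Option ℕ → ℝ
  nonneg : ∀ b o, 0 ≤ prob b o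
  total : ∀ b, ∑' o : Option ℕ, prob b o = 1
  adapted : ∀ b b' : ℕ → Bool, ∀ i : ℕ,
    (∀ j, j < i → b j = b' j) → prob b (some i) = prob b' (some i)

/-- Success probability: total probability of crossing at a minute with no car. -/
noncomputable def succProb (S : FrogStrategy) (b : ℕ → Bool) : ℝ :=
  ∑' i : ℕ, if b i = false then S.prob b (some i) else 0

/-- Death probability: total probability of crossing at a minute with a car. -/
noncomputable def deathProb (S : FrogStrategy) (b : ℕ → Bool) : ℝ :=
  ∑' i : ℕ, if b i = true then S.prob b (some i) else 0

/-- `cars b t` is `N_t(b) = b_1 + ⋯ + b_t`, the number of cars among the first `t` minutes. -/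
def cars (b : ℕ → Bool) (t : ℕ) : ℕ :=
  ((Finset.range t).filter (fun i => b i = true)).card

/-- `b` is `ε`-weakly sparse if `lim_{s→∞} inf_{t ≥ s} N_t(b)/t ≤ ε`. -/
def epsWeaklySparse (ε : ℝ) (b : ℕ → Bool) : Prop :=
  Filter.liminf (fun t : ℕ => (cars b t : ℝ) / t) Filter.atTop ≤ ε

/-!
The frog keeps a slack `g + q·S - (1 - q)·D > 0`, where `S` and `D` are the probabilities
already spent on free minutes and on minutes with a car, and at each minute crosses with
probability `k` times the slack, capped by the probability not yet spent. Positivity of the slack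
gives `D < q + g` on every sequence, and `S ≥ 1 - q - g` whenever all the probability gets spent.
If some probability were never spent, the cap would eventually be inactive, so the slack would be
multiplied by `1 + q k` at each free minute and by `1 - (1 - q) k` at each car. At the times `t`
with `N_t ≤ p t`, where `p < q` and `k ≤ q - p`, its logarithm then grows linearly in `t`,
although the slack never exceeds `g + q`. Taking `ε < p < q` and `g` small gives the theorem.
-/

open Filter Finset Real

theorem hasSum_option_elim {ι α : Type*} [AddCommMonoid α] [TopologicalSpace α] [ContinuousAdd α]
    {f : ι → α} {s : α} (a : α) (hf : HasSum f s) :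
    HasSum (fun o : Option ι => o.elim a f) (a + s) := by
  have hsome : HasSum (fun o : Option ι => o.elim 0 f) s :=
    ((Option.some_injective ι).hasSum_iff (by rintro (_ | i) h <;> simp_all)).mp hf
  convert (hasSum_ite_eq none a).add hsome using 1
  funext o
  cases o <;> simp

theorem cars_le (b : ℕ → Bool) (t : ℕ) : cars b t ≤ t :=
  (card_filter_le _ _).trans (card_range t).le

theorem cars_succ (b : ℕ → Bool) (n : ℕ) :
    cars b (n + 1) = cars b n + if b n = true then 1 else 0 := by
  simp only [cars, range_add_one, filter_insert]
  split_ifs <;> simp [card_insert_of_notMem]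

theorem sum_range_comp_eq_cars (f : Bool → ℝ) (b : ℕ → Bool) (n : ℕ) :
    ∑ i ∈ range n, f (b i) = (n - cars b n) * f false + cars b n * f true := by
  induction n with
  | zero => simp [cars]
  | succ n ih =>
    rw [sum_range_succ, ih, cars_succ]
    cases b n <;> simp only [Bool.false_eq_true, if_true, if_false, Nat.cast_add, Nat.cast_one,
      add_zero] <;> ring

theorem frequently_cars_le_of_epsWeaklySparse {ε p : ℝ} {b : ℕ → Bool}
    (hb : epsWeaklySparse ε b) (hεp : ε < p) : ∃ᶠ t in atTop, (cars b t : ℝ) ≤ p * t := by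
  have hle : ∀ t : ℕ, (cars b t : ℝ) / t ≤ 1 := fun t =>
    div_le_one_of_le₀ (by exact_mod_cast cars_le b t) t.cast_nonneg
  refine (frequently_lt_of_liminf_lt (isCoboundedUnder_ge_of_le _ hle) (hb.trans_lt hεp)).mono
    fun t ht => ?_
  rcases t.eq_zero_or_pos with rfl | htpos
  · simp [cars]
  · exact ((div_lt_iff₀ (by exact_mod_cast htpos)).mp ht).le

namespace FrogStrategy

noncomputable def ofStakes (m : (ℕ → Bool) → ℕ → ℝ) (nonneg : ∀ b i, 0 ≤ m b i)
    (sum_le_one : ∀ b n, ∑ i ∈ range n, m b i ≤ 1)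
    (adapted : ∀ b b' i, (∀ j < i, b j = b' j) → m b i = m b' i) : FrogStrategy where
  prob b o := o.elim (1 - ∑' i, m b i) (m b)
  nonneg b o := by
    cases o with
    | none => simpa using Real.tsum_le_of_sum_range_le (nonneg b) (sum_le_one b)
    | some i => exact nonneg b i
  total b := by
    simpa using (hasSum_option_elim (1 - ∑' i, m b i)
      (summable_of_sum_range_le (nonneg b) (sum_le_one b)).hasSum).tsum_eq
  adapted := adapted

end FrogStrategy

namespace SlackStrategy

noncomputable section

variable (q g k : ℝ)

-- A state `x` holds the probability spent so far on free minutes (`x.1`) and on cars (`x.2`).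
def slack (x : ℝ × ℝ) : ℝ := g + q * x.1 - (1 - q) * x.2

def stake (x : ℝ × ℝ) : ℝ := min (k * slack q g x) (1 - x.1 - x.2)

def step (car : Bool) (x : ℝ × ℝ) : ℝ × ℝ :=
  if car then (x.1, x.2 + stake q g k x) else (x.1 + stake q g k x, x.2)

def state (b : ℕ → Bool) : ℕ → ℝ × ℝ
  | 0 => (0, 0)
  | n + 1 => step q g k (b n) (state b n)

def bet (b : ℕ → Bool) (n : ℕ) : ℝ := stake q g k (state q g k b n)

def slackFactor (car : Bool) : ℝ := if car then 1 - (1 - q) * k else 1 + q * k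

def logGrowthRate (p : ℝ) : ℝ :=
  (1 - p) * log (slackFactor q k false) + p * log (slackFactor q k true)

def Admissible (x : ℝ × ℝ) : Prop := 0 ≤ x.1 ∧ 0 ≤ x.2 ∧ x.1 + x.2 ≤ 1 ∧ 0 < slack q g x

variable {q g k} {b : ℕ → Bool}

@[simp] theorem state_succ (n : ℕ) : state q g k b (n + 1) = step q g k (b n) (state q g k b n) :=
  rfl

@[simp] theorem slackFactor_true : slackFactor q k true = 1 - (1 - q) * k := rfl

@[simp] theorem slackFactor_false : slackFactor q k false = 1 + q * k := rfl

theorem stake_nonneg (hk : 0 ≤ k) {x : ℝ × ℝ} (hx : Admissible q g x) : 0 ≤ stake q g k x :=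
  le_min (mul_nonneg hk hx.2.2.2.le) (by linarith [hx.2.2.1])

theorem Admissible.step (hq : q ∈ Set.Icc 0 1) (hk : k ∈ Set.Ico 0 1) {x : ℝ × ℝ}
    (hx : Admissible q g x) (car : Bool) : Admissible q g (step q g k car x) := by
  have hm := stake_nonneg hk.1 hx
  have hm_slack : stake q g k x ≤ k * slack q g x := min_le_left _ _
  have hm_rest : stake q g k x ≤ 1 - x.1 - x.2 := min_le_right _ _
  obtain ⟨h1, h2, -, h4⟩ := hx
  unfold slack at h4 hm_slack
  cases car <;> simp only [SlackStrategy.step, Admissible, slack, Bool.false_eq_true, if_true,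
    if_false] <;> refine ⟨by linarith, by linarith, by linarith, ?_⟩
  · nlinarith [hq.1]
  · have hqk : (1 - q) * k < 1 := by nlinarith [hq.1, hk.1, hk.2]
    nlinarith [mul_le_mul_of_nonneg_left hm_slack (sub_nonneg.2 hq.2), mul_pos (sub_pos.2 hqk) h4]

theorem admissible_state (hq : q ∈ Set.Icc 0 1) (hk : k ∈ Set.Ico 0 1) (hg : 0 < g)
    (n : ℕ) : Admissible q g (state q g k b n) := by
  induction n with
  | zero => exact ⟨le_rfl, le_rfl, by simp [state], by simpa [state, slack] using hg⟩
  | succ n ih => exact ih.step hq hk (b n)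

theorem bet_nonneg (hq : q ∈ Set.Icc 0 1) (hk : k ∈ Set.Ico 0 1) (hg : 0 < g) (n : ℕ) :
    0 ≤ bet q g k b n :=
  stake_nonneg hk.1 (admissible_state hq hk hg n)

theorem state_eq_sum (n : ℕ) :
    state q g k b n = (∑ i ∈ range n, if b i = false then bet q g k b i else 0,
      ∑ i ∈ range n, if b i = true then bet q g k b i else 0) := by
  induction n with
  | zero => rfl
  | succ n ih =>
    rw [sum_range_succ, sum_range_succ, state_succ, bet, ih]
    cases b n <;> simp [SlackStrategy.step]

theorem sum_range_bet (n : ℕ) :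
    ∑ i ∈ range n, bet q g k b i = (state q g k b n).1 + (state q g k b n).2 := by
  rw [state_eq_sum, ← sum_add_distrib]
  exact sum_congr rfl fun i _ => by cases b i <;> simp

theorem state_congr {b' : ℕ → Bool} {n : ℕ} (h : ∀ j < n, b j = b' j) :
    state q g k b n = state q g k b' n := by
  induction n with
  | zero => rfl
  | succ n ih =>
    simp only [state_succ, h n n.lt_succ_self, ih fun j hj => h j (hj.trans n.lt_succ_self)]

theorem slack_le (hq : q ∈ Set.Icc 0 1) {x : ℝ × ℝ} (hx : Admissible q g x) :
    slack q g x ≤ g + q := by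
  obtain ⟨h1, h2, h3, -⟩ := hx
  unfold slack
  nlinarith [hq.1, hq.2]

theorem tsum_death_le (hq : q ∈ Set.Icc 0 1) (hk : k ∈ Set.Ico 0 1) (hg : 0 < g) :
    ∑' i, (if b i = true then bet q g k b i else 0) ≤ q + g := by
  refine Real.tsum_le_of_sum_range_le (fun i => ?_) fun n => ?_
  · split_ifs
    exacts [bet_nonneg hq hk hg i, le_rfl]
  · obtain ⟨h1, h2, h3, h4⟩ := admissible_state (b := b) hq hk hg n
    rw [state_eq_sum] at h1 h2 h3 h4
    unfold slack at h4
    dsimp only at *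
    nlinarith [hq.1]

theorem sum_range_bet_le_one (hq : q ∈ Set.Icc 0 1) (hk : k ∈ Set.Ico 0 1) (hg : 0 < g)
    (n : ℕ) : ∑ i ∈ range n, bet q g k b i ≤ 1 := by
  rw [sum_range_bet]
  exact (admissible_state hq hk hg n).2.2.1

theorem summable_bet (hq : q ∈ Set.Icc 0 1) (hk : k ∈ Set.Ico 0 1) (hg : 0 < g) :
    Summable (bet q g k b) :=
  summable_of_sum_range_le (bet_nonneg hq hk hg) (sum_range_bet_le_one hq hk hg)

theorem summable_ite_bet (hq : q ∈ Set.Icc 0 1) (hk : k ∈ Set.Ico 0 1) (hg : 0 < g)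
    (car : Bool) : Summable fun i => if b i = car then bet q g k b i else 0 :=
  (summable_bet hq hk hg).of_nonneg_of_le
    (fun i => by split_ifs; exacts [bet_nonneg hq hk hg i, le_rfl])
    (fun i => by split_ifs; exacts [le_rfl, bet_nonneg hq hk hg i])

theorem tsum_free_ge (hq : q ∈ Set.Icc 0 1) (hk : k ∈ Set.Ico 0 1) (hg : 0 < g)
    (h : HasSum (bet q g k b) 1) :
    1 - q - g ≤ ∑' i, (if b i = false then bet q g k b i else 0) := by
  have hF := (summable_ite_bet (b := b) hq hk hg false).hasSum
  have hD := (summable_ite_bet (b := b) hq hk hg true).hasSum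
  set F := ∑' i, (if b i = false then bet q g k b i else 0)
  set D := ∑' i, (if b i = true then bet q g k b i else 0)
  have hFD : F + D = 1 := (hF.add hD).unique (h.congr_fun fun i => by cases b i <;> simp)
  have hslack : (1 - q) * D - q * F ≤ g := by
    refine le_of_tendsto' ((hD.tendsto_sum_nat.const_mul _).sub (hF.tendsto_sum_nat.const_mul _))
      fun n => ?_
    have h4 := (admissible_state (b := b) hq hk hg n).2.2.2
    rw [state_eq_sum] at h4
    unfold slack at h4
    dsimp only at h4
    linarith
  linear_combination hslack - (1 - q) * hFD

theorem slack_step_of_stake_eq {x : ℝ × ℝ} (car : Bool) (h : stake q g k x = k * slack q g x) :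
    slack q g (step q g k car x) = slack q g x * slackFactor q k car := by
  unfold slack at h ⊢
  cases car <;> simp only [SlackStrategy.step, slackFactor_true, slackFactor_false,
    Bool.false_eq_true, if_true, if_false] <;> rw [h] <;> ring

theorem slackFactor_pos (hq : q ∈ Set.Icc 0 1) (hk : k ∈ Set.Ico 0 1) (car : Bool) :
    0 < slackFactor q k car := by
  cases car <;> simp only [slackFactor_true, slackFactor_false]
  · nlinarith [hq.1, hk.1]
  · nlinarith [hq.1, hq.2, hk.1, hk.2]

theorem eventually_bet_eq_of_tsum_lt (hq : q ∈ Set.Icc 0 1) (hk : k ∈ Set.Ico 0 1) (hg : 0 < g)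
    (h : ∑' i, bet q g k b i < 1) :
    ∀ᶠ n in atTop, bet q g k b n = k * slack q g (state q g k b n) := by
  have hsum := summable_bet (b := b) hq hk hg
  filter_upwards [hsum.tendsto_atTop_zero.eventually (gt_mem_nhds (sub_pos.2 h))] with n hn
  have hrest : 1 - ∑' i, bet q g k b i ≤ 1 - (state q g k b n).1 - (state q g k b n).2 := by
    have := hsum.sum_le_tsum (range n) fun i _ => bet_nonneg hq hk hg i
    rw [sum_range_bet] at this
    linarith
  exact min_eq_left ((min_lt_iff.mp (hn.trans_le hrest)).resolve_right (lt_irrefl _)).le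

theorem log_slack_state_eq (hq : q ∈ Set.Icc 0 1) (hk : k ∈ Set.Ico 0 1) (hg : 0 < g) {I : ℕ}
    (hI : ∀ n ≥ I, bet q g k b n = k * slack q g (state q g k b n)) {n : ℕ} (hn : I ≤ n) :
    log (slack q g (state q g k b n)) =
      log (slack q g (state q g k b I)) + ∑ i ∈ Ico I n, log (slackFactor q k (b i)) := by
  induction n, hn using Nat.le_induction with
  | base => simp
  | succ n hn ih =>
    rw [sum_Ico_succ_top hn, state_succ, slack_step_of_stake_eq (b n) (hI n hn),
      log_mul (admissible_state hq hk hg n).2.2.2.ne' (slackFactor_pos hq hk _).ne', ih]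
    ring

theorem log_slack_state_ge (hq : q ∈ Set.Icc 0 1) (hk : k ∈ Set.Ico 0 1) (hg : 0 < g) {p : ℝ}
    {I : ℕ} (hI : ∀ n ≥ I, bet q g k b n = k * slack q g (state q g k b n)) {t : ℕ} (ht : I ≤ t)
    (hcars : (cars b t : ℝ) ≤ p * t) :
    log (slack q g (state q g k b I)) - I * log (slackFactor q k false) + t * logGrowthRate q k p ≤
      log (slack q g (state q g k b t)) := by
  have hL : 0 ≤ log (slackFactor q k false) :=
    log_nonneg (by rw [slackFactor_false]; nlinarith [hq.1, hk.1])
  have hM : log (slackFactor q k true) ≤ 0 :=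
    log_nonpos (slackFactor_pos hq hk true).le (by rw [slackFactor_true]; nlinarith [hq.2, hk.1])
  have hstep_le : ∀ i, log (slackFactor q k (b i)) ≤ log (slackFactor q k false) := fun i => by
    cases b i
    exacts [le_rfl, hM.trans hL]
  have hhead : ∑ i ∈ range I, log (slackFactor q k (b i)) ≤ I * log (slackFactor q k false) := by
    simpa using sum_le_sum fun i (_ : i ∈ range I) => hstep_le i
  have hsplit := sum_range_add_sum_Ico (fun i => log (slackFactor q k (b i))) ht
  have hcount := sum_range_comp_eq_cars (fun c => log (slackFactor q k c)) b t
  rw [log_slack_state_eq hq hk hg hI ht, logGrowthRate]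
  nlinarith [mul_nonneg (sub_nonneg.2 hcars) (sub_nonneg.2 (hM.trans hL))]

theorem logGrowthRate_pos {p : ℝ} (hp : 0 ≤ p) (hpq : p < q) (hq : q ≤ 1)
    (hk : k ∈ Set.Ioc 0 (q - p)) : 0 < logGrowthRate q k p := by
  rw [logGrowthRate, slackFactor_false, slackFactor_true]
  obtain ⟨hk0, hkpq⟩ := hk
  have ha : 0 < 1 + q * k := by nlinarith
  have hc : 0 < 1 - (1 - q) * k := by nlinarith
  have hq01 : 0 ≤ q * (1 - q) := mul_nonneg (by linarith) (by linarith)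
  have hq01' : q * (1 - q) < 1 := by nlinarith [sq_nonneg (q - 1 / 2)]
  have hmargin : 0 < q - p - k * q * (1 - q) := by
    nlinarith [mul_le_mul_of_nonneg_right hkpq hq01, mul_pos (sub_pos.2 hpq) (sub_pos.2 hq01')]
  have hla := mul_le_mul_of_nonneg_left (one_sub_inv_le_log_of_pos ha) (by linarith : 0 ≤ 1 - p)
  have hlc := mul_le_mul_of_nonneg_left (one_sub_inv_le_log_of_pos hc) hp
  have hlin : (1 - p) * (1 - (1 + q * k)⁻¹) + p * (1 - (1 - (1 - q) * k)⁻¹) =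
      k * (q - p - k * q * (1 - q)) / ((1 + q * k) * (1 - (1 - q) * k)) := by
    set a := 1 + q * k with ha_def
    set c := 1 - (1 - q) * k with hc_def
    field_simp
    rw [ha_def, hc_def]
    ring
  have : 0 < k * (q - p - k * q * (1 - q)) / ((1 + q * k) * (1 - (1 - q) * k)) := by positivity
  linarith

theorem hasSum_bet_one {p : ℝ} (hp : 0 ≤ p) (hpq : p < q) (hq : q < 1)
    (hk : k ∈ Set.Ioc 0 (q - p)) (hg : 0 < g) (hdips : ∃ᶠ t in atTop, (cars b t : ℝ) ≤ p * t) :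
    HasSum (bet q g k b) 1 := by
  have hq' : q ∈ Set.Icc 0 1 := ⟨by linarith, hq.le⟩
  have hk' : k ∈ Set.Ico 0 1 := ⟨hk.1.le, by linarith [hk.2]⟩
  have hsum := summable_bet (b := b) hq' hk' hg
  refine hsum.hasSum_iff.mpr (by_contra fun hne => ?_)
  have hlt : ∑' i, bet q g k b i < 1 :=
    (Real.tsum_le_of_sum_range_le (bet_nonneg hq' hk' hg)
      (sum_range_bet_le_one hq' hk' hg)).lt_of_ne hne
  obtain ⟨I, hI⟩ := eventually_atTop.mp (eventually_bet_eq_of_tsum_lt hq' hk' hg hlt)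
  have hG := logGrowthRate_pos hp hpq hq.le hk
  obtain ⟨N, hN⟩ := exists_nat_gt ((log (g + q) - log (slack q g (state q g k b I)) +
    I * log (slackFactor q k false)) / logGrowthRate q k p)
  obtain ⟨t, ht, hcars⟩ := frequently_atTop.mp hdips (max I N)
  have hlow := log_slack_state_ge hq' hk' hg hI (le_of_max_le_left ht) hcars
  have hup : log (slack q g (state q g k b t)) ≤ log (g + q) :=
    log_le_log (admissible_state hq' hk' hg t).2.2.2 (slack_le hq' (admissible_state hq' hk' hg t))
  have hNt : (N : ℝ) ≤ t := by exact_mod_cast le_of_max_le_right ht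
  rw [div_lt_iff₀ hG] at hN
  nlinarith

def frogStrategy (hq : q ∈ Set.Icc 0 1) (hk : k ∈ Set.Ico 0 1) (hg : 0 < g) : FrogStrategy :=
  FrogStrategy.ofStakes (bet q g k) (fun _ => bet_nonneg hq hk hg)
    (fun _ => sum_range_bet_le_one hq hk hg)
    (fun _ _ _ h => by rw [bet, bet, state_congr h])

end

end SlackStrategy

theorem main_theorem (ε γ : ℝ) (hε0 : 0 < ε) (hε1 : ε < 1) (hγ : 0 < γ) :
    ∃ S : FrogStrategy,
      (∃ c : ℝ, 1 - ε - γ < c ∧ ∀ b : ℕ → Bool, epsWeaklySparse ε b → c ≤ succProb S b) ∧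
      (∀ b : ℕ → Bool, deathProb S b ≤ ε + γ) := by
  set δ := min γ (1 - ε) / 3
  have hδ0 : 0 < δ := div_pos (lt_min hγ (sub_pos.2 hε1)) three_pos
  have hδγ : δ ≤ γ / 3 := div_le_div_of_nonneg_right (min_le_left _ _) zero_le_three
  have hδε : δ ≤ (1 - ε) / 3 := div_le_div_of_nonneg_right (min_le_right _ _) zero_le_three
  have hq : ε + δ ∈ Set.Icc 0 1 := ⟨by linarith, by linarith⟩
  have hk : δ / 2 ∈ Set.Ico 0 1 := ⟨by linarith, by linarith⟩
  refine ⟨SlackStrategy.frogStrategy hq hk hδ0, ⟨1 - (ε + δ) - δ, by linarith, fun b hb => ?_⟩,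
    fun b => (SlackStrategy.tsum_death_le hq hk hδ0).trans (by linarith)⟩
  have hdips := frequently_cars_le_of_epsWeaklySparse hb (lt_add_of_pos_right ε (half_pos hδ0))
  exact SlackStrategy.tsum_free_ge hq hk hδ0 (SlackStrategy.hasSum_bet_one (p := ε + δ / 2)
    (by linarith) (by linarith) (by linarith) ⟨half_pos hδ0, by linarith⟩ hδ0 hdips)
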